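/- Let m ≤ n be natural numbers with n ≥ 1. Then: (a) for every σ ∈ Sym(n), d_n((σ↓Sym(m))↑Sym(n), σ) ≤ 2(n−m)/n; and (b) for every τ ∈ Sym(m), (τ↑Sym(n))↓Sym(m) = τ. -/

import Mathlib

open Filter Equiv Set

namespace SymPaper

/-- The normalized Hamming distance on permutations of `Fin N`:
`d_N(σ,τ) = |{i : σ i ≠ τ i}| / N`. -/
noncomputable def hd {N : ℕ} (σ τ : Equiv.Perm (Fin N)) : ℝ :=
  ((Finset.univ.filter fun i => σ i ≠ τ i).card : ℝ) / N

lemma hd_nonneg {N : ℕ} (σ τ : Equiv.Perm (Fin N)) : 0 ≤ hd σ τ :=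
  div_nonneg (Nat.cast_nonneg _) (Nat.cast_nonneg _)

lemma hd_self {N : ℕ} (σ : Equiv.Perm (Fin N)) : hd σ σ = 0 := by
  simp [hd]

lemma hd_filter_eq_support {N : ℕ} (σ τ : Equiv.Perm (Fin N)) :
    (Finset.univ.filter fun i => σ i ≠ τ i) = (σ⁻¹ * τ).support := by
  ext i
  simp only [Finset.mem_filter, Finset.mem_univ, true_and, Equiv.Perm.mem_support,
    Equiv.Perm.mul_apply, ne_eq, Equiv.Perm.inv_eq_iff_eq]
  exact not_congr ⟨fun h => h.symm, fun h => h.symm⟩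

lemma hd_one {N : ℕ} (σ : Equiv.Perm (Fin N)) :
    hd σ 1 = (σ.support.card : ℝ) / N := by
  unfold hd
  rw [hd_filter_eq_support, mul_one, Equiv.Perm.support_inv]

lemma hd_mul_one_le {N : ℕ} (σ τ : Equiv.Perm (Fin N)) :
    hd (σ * τ) 1 ≤ hd σ 1 + hd τ 1 := by
  rcases Nat.eq_zero_or_pos N with h0 | hpos
  · subst h0; simp [hd]
  · have hN : (0 : ℝ) < N := by exact_mod_cast hpos
    rw [hd_one, hd_one, hd_one, ← add_div]
    rw [div_le_div_iff_of_pos_right hN]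
    have h1 : ((σ * τ).support).card ≤ (σ.support ⊔ τ.support).card :=
      Finset.card_le_card (Equiv.Perm.support_mul_le σ τ)
    have h2 : (σ.support ⊔ τ.support).card ≤ σ.support.card + τ.support.card :=
      Finset.card_union_le _ _
    exact_mod_cast le_trans h1 h2

lemma hd_inv_one {N : ℕ} (σ : Equiv.Perm (Fin N)) : hd σ⁻¹ 1 = hd σ 1 := by
  rw [hd_one, hd_one, Equiv.Perm.support_inv]

lemma hd_conj_one {N : ℕ} (g σ : Equiv.Perm (Fin N)) :
    hd (g * σ * g⁻¹) 1 = hd σ 1 := by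
  rw [hd_one, hd_one, Equiv.Perm.support_conj, Finset.card_map]

/-- The normal subgroup of elements of `∏ n, Sym(k n)` that tend to the identity
along the filter `F`. -/
def symNull (k : ℕ → ℕ) (F : Filter ℕ) : Subgroup (∀ n, Equiv.Perm (Fin (k n))) where
  carrier := {a | Filter.Tendsto (fun n => hd (a n) 1) F (nhds 0)}
  one_mem' := by
    simpa [hd_self] using (tendsto_const_nhds : Filter.Tendsto (fun _ : ℕ => (0:ℝ)) F (nhds 0))
  mul_mem' := by
    intro a b ha hb
    refine squeeze_zero (fun n => hd_nonneg _ _) (fun n => ?_) (by simpa using ha.add hb)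
    exact hd_mul_one_le (a n) (b n)
  inv_mem' := by
    intro a ha
    simpa [hd_inv_one] using ha

instance symNull_normal (k : ℕ → ℕ) (F : Filter ℕ) : (symNull k F).Normal := by
  constructor
  intro a ha g
  show Filter.Tendsto (fun n => hd ((g * a * g⁻¹) n) 1) F (nhds 0)
  have ha' : Filter.Tendsto (fun n => hd (a n) 1) F (nhds 0) := ha
  simpa [hd_conj_one] using ha'

/-- The metric reduced product `Sym[(k n)ₙ]`. -/
abbrev SymRP (k : ℕ → ℕ) : Type :=
  (∀ n, Equiv.Perm (Fin (k n))) ⧸ symNull k Filter.atTop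

/-- The metric ultraproduct `∏ₙ Sym(k n) / U`. -/
abbrev SymUP (k : ℕ → ℕ) (U : Ultrafilter ℕ) : Type :=
  (∀ n, Equiv.Perm (Fin (k n))) ⧸ symNull k (U : Filter ℕ)

/-- Class of a sequence in the metric reduced product. -/
def mkRP {k : ℕ → ℕ} (a : ∀ n, Equiv.Perm (Fin (k n))) : SymRP k :=
  QuotientGroup.mk a

/-- Class of a sequence in the metric ultraproduct. -/
def mkUP {k : ℕ → ℕ} (U : Ultrafilter ℕ) (a : ∀ n, Equiv.Perm (Fin (k n))) : SymUP k U :=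
  QuotientGroup.mk a

section CutLift

lemma cut_exists {n : ℕ} (σ : Equiv.Perm (Fin n)) {m : ℕ} (h : m ≤ n) (i : Fin m) :
    ∃ kk : ℕ, 1 ≤ kk ∧ (((σ ^ kk) (Fin.castLE h i) : Fin n) : ℕ) < m := by
  refine ⟨orderOf σ, orderOf_pos σ, ?_⟩
  rw [pow_orderOf_eq_one]
  simpa using i.2

/-- The underlying function of the cutting `σ ↓ Sym(m)`: it sends `i < m` to
`σ^k i` for the least `k ≥ 1` with `σ^k i < m`. -/
noncomputable def cutFun {n : ℕ} (σ : Equiv.Perm (Fin n)) {m : ℕ} (h : m ≤ n) (i : Fin m) :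
    Fin m :=
  ⟨(((σ ^ (Nat.find (cut_exists σ h i))) (Fin.castLE h i) : Fin n) : ℕ),
    (Nat.find_spec (cut_exists σ h i)).2⟩

lemma cutFun_injective {n : ℕ} (σ : Equiv.Perm (Fin n)) {m : ℕ} (h : m ≤ n) :
    Function.Injective (cutFun σ h) := by
  have key : ∀ i j : Fin m,
      Nat.find (cut_exists σ h i) ≤ Nat.find (cut_exists σ h j) →
      cutFun σ h i = cutFun σ h j → i = j := by
    intro i j hle hij
    set ki := Nat.find (cut_exists σ h i) with hki
    set kj := Nat.find (cut_exists σ h j) with hkj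
    have hv : ((cutFun σ h i : Fin m) : ℕ) = ((cutFun σ h j : Fin m) : ℕ) :=
      congrArg Fin.val hij
    have hval : (σ ^ ki) (Fin.castLE h i) = (σ ^ kj) (Fin.castLE h j) := Fin.ext hv
    have hki1 : 1 ≤ ki := (Nat.find_spec (cut_exists σ h i)).1
    have hkj1 : 1 ≤ kj := (Nat.find_spec (cut_exists σ h j)).1
    have hpow : σ ^ ki * σ ^ (kj - ki) = σ ^ kj := by
      rw [← pow_add, Nat.add_sub_cancel' hle]
    have h2 : (σ ^ (kj - ki)) (Fin.castLE h j) = Fin.castLE h i := by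
      apply (σ ^ ki).injective
      calc (σ ^ ki) ((σ ^ (kj - ki)) (Fin.castLE h j))
          = (σ ^ ki * σ ^ (kj - ki)) (Fin.castLE h j) := rfl
        _ = (σ ^ kj) (Fin.castLE h j) := by rw [hpow]
        _ = (σ ^ ki) (Fin.castLE h i) := hval.symm
    by_cases hzero : kj - ki = 0
    · have hkeq : ki = kj := le_antisymm hle (Nat.sub_eq_zero_iff_le.mp hzero)
      have : Fin.castLE h i = Fin.castLE h j := by
        apply (σ ^ kj).injective
        rw [← hval, hkeq]
      exact Fin.castLE_injective h this
    · exfalso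
      have hlt : kj - ki < kj := Nat.sub_lt (lt_of_lt_of_le Nat.one_pos hkj1) hki1
      have := Nat.find_min (cut_exists σ h j) hlt
      apply this
      refine ⟨Nat.one_le_iff_ne_zero.mpr hzero, ?_⟩
      rw [h2]
      simpa using i.2
  intro i j hij
  rcases le_total (Nat.find (cut_exists σ h i)) (Nat.find (cut_exists σ h j)) with hle | hle
  · exact key i j hle hij
  · exact (key j i hle hij.symm).symm

/-- Cutting `σ ↓ Sym(m)` of a permutation `σ ∈ Sym(n)` for `m ≤ n`. -/
noncomputable def cutPerm {n : ℕ} (σ : Equiv.Perm (Fin n)) {m : ℕ} (h : m ≤ n) :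
    Equiv.Perm (Fin m) :=
  Equiv.ofBijective (cutFun σ h) (Finite.injective_iff_bijective.mp (cutFun_injective σ h))

/-- Lifting `τ ↑ Sym(n)` of a permutation `τ ∈ Sym(m)` for `m ≤ n`: it acts as `τ` on
`{0,…,m-1}` and fixes the remaining points. -/
noncomputable def liftPerm {m : ℕ} (τ : Equiv.Perm (Fin m)) {n : ℕ} (h : m ≤ n) :
    Equiv.Perm (Fin n) :=
  τ.viaFintypeEmbedding (Fin.castLEEmb h)

/-- `σ ↕ Sym(n)`: lifting if `m ≤ n`, cutting if `n ≤ m`. -/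
noncomputable def updown {m : ℕ} (σ : Equiv.Perm (Fin m)) (n : ℕ) : Equiv.Perm (Fin n) :=
  if h : m ≤ n then liftPerm σ h else cutPerm σ (le_of_not_ge h)

end CutLift

/-- An almost permutation of `ℕ`: a map with cofinite range which is injective on a
cofinite set. -/
def AlmostPerm (f : ℕ → ℕ) : Prop :=
  (Set.range f)ᶜ.Finite ∧ ∃ S : Set ℕ, Sᶜ.Finite ∧ Set.InjOn f S

/-- `limsup` of a real sequence along an infinite set of indices. -/
noncomputable def limsupOn (S : Set ℕ) (x : ℕ → ℝ) : ℝ :=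
  Filter.limsup x (Filter.atTop ⊓ Filter.principal S)

/-- Almost equality: the sets where two sets of naturals differ is finite. -/
instance finSetoid : Setoid (Set ℕ) where
  r S T := (symmDiff S T).Finite
  iseqv := by
    refine ⟨fun S => by simp [symmDiff_self], fun h => by rwa [symmDiff_comm], ?_⟩
    intro S T V h1 h2
    exact (h1.union h2).subset (symmDiff_triangle S T V)

/-- The Boolean algebra `P(ℕ)/Fin`. -/
def PFin : Type := Quotient finSetoid

/-- Class of a subset of `ℕ` in `P(ℕ)/Fin`. -/
def PFin.mk (S : Set ℕ) : PFin := Quotient.mk finSetoid S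

/-- Join in `P(ℕ)/Fin`. -/
def PFin.sup : PFin → PFin → PFin :=
  Quotient.map₂ (· ∪ ·) (by
    intro S S' h1 T T' h2
    refine Set.Finite.subset (h1.union h2) ?_
    intro x hx
    simp only [Set.mem_symmDiff, Set.mem_union] at *
    tauto)

/-- Complement in `P(ℕ)/Fin`. -/
def PFin.compl : PFin → PFin :=
  Quotient.map (·ᶜ) (by
    intro S T h
    show (symmDiff Sᶜ Tᶜ).Finite
    rwa [compl_symmDiff_compl])

/-- Todorčević's open coloring axiom `OCA`. -/
def OCA : Prop :=
  ∀ (X : Type) [MetricSpace X] [TopologicalSpace.SeparableSpace X],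
    ∀ K : Set (X × X), IsOpen K → (∀ x y : X, (x, y) ∈ K → (y, x) ∈ K) →
      (∃ Y : Set X, ¬ Y.Countable ∧ ∀ x ∈ Y, ∀ y ∈ Y, x ≠ y → (x, y) ∈ K) ∨
      (∃ c : ℕ → Set X, (⋃ n, c n) = Set.univ ∧
        ∀ n, ∀ x ∈ c n, ∀ y ∈ c n, x ≠ y → (x, y) ∉ K)

/-- Martin's axiom for σ-linked partial orders (for `ℵ₁` many dense sets). -/
def MAσlinked : Prop :=
  ∀ (P : Type) [PartialOrder P],
    (∃ Ps : ℕ → Set P, (⋃ n, Ps n) = Set.univ ∧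
      ∀ n, ∀ p ∈ Ps n, ∀ q ∈ Ps n, ∃ r : P, r ≤ p ∧ r ≤ q) →
    ∀ (ι : Type) (D : ι → Set P), Cardinal.mk ι ≤ Cardinal.aleph 1 →
      (∀ i, ∀ p : P, ∃ q ∈ D i, q ≤ p) →
      ∃ G : Set P,
        (∀ p ∈ G, ∀ q ∈ G, ∃ r ∈ G, r ≤ p ∧ r ≤ q) ∧
        (∀ p ∈ G, ∀ q : P, p ≤ q → q ∈ G) ∧
        ∀ i, (G ∩ D i).Nonempty

/- If both `i` and `σ i` lie below `m`, the cutting reaches `σ i` in a single step, so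
`(σ ↓ m) ↑ n` agrees with `σ` at `i`. Hence the two can only differ on `{i ≥ m} ∪ σ⁻¹ {j ≥ m}`,
a set of at most `2 (n - m)` points. A lifted permutation maps `{0, …, m - 1}` into itself, so
cutting it back takes a single step at every point. -/

section CutLift

open Finset

variable {m n : ℕ} (h : m ≤ n)

lemma liftPerm_castLE (τ : Perm (Fin m)) (i : Fin m) :
    liftPerm τ h (Fin.castLE h i) = Fin.castLE h (τ i) :=
  τ.viaFintypeEmbedding_apply_image (Fin.castLEEmb h) i

lemma castLE_cutPerm_of_lt (σ : Perm (Fin n)) (i : Fin m)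
    (hi : (σ (Fin.castLE h i) : ℕ) < m) :
    Fin.castLE h (cutPerm σ h i) = σ (Fin.castLE h i) := by
  have hfind : Nat.find (cut_exists σ h i) = 1 :=
    (Nat.find_eq_iff _).mpr ⟨⟨le_rfl, by simpa using hi⟩, fun k hk ⟨hk1, _⟩ => by omega⟩
  ext
  simp [cutPerm, cutFun, hfind]

theorem cutPerm_liftPerm (τ : Perm (Fin m)) : cutPerm (liftPerm τ h) h = τ := by
  ext i
  have hi : (liftPerm τ h (Fin.castLE h i) : ℕ) < m := by
    simp [liftPerm_castLE]
  simpa [liftPerm_castLE] using congrArg Fin.val (castLE_cutPerm_of_lt h _ i hi)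

lemma liftPerm_cutPerm_apply_of_lt (σ : Perm (Fin n)) (i : Fin n) (hi : (i : ℕ) < m)
    (hσi : (σ i : ℕ) < m) : liftPerm (cutPerm σ h) h i = σ i := by
  obtain ⟨i, rfl⟩ : ∃ j : Fin m, Fin.castLE h j = i := ⟨⟨i, hi⟩, rfl⟩
  rw [liftPerm_castLE, castLE_cutPerm_of_lt h σ i hσi]

lemma card_filter_le_val : #{i : Fin n | m ≤ (i : ℕ)} = n - m := by
  have := card_filter_add_card_filter_not (s := (univ : Finset (Fin n))) (fun i => (i : ℕ) < m)
  simp only [not_lt, card_univ, Fintype.card_fin, Fin.card_filter_val_lt] at this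
  omega

lemma card_filter_liftPerm_cutPerm_ne_le (σ : Perm (Fin n)) :
    #{i | liftPerm (cutPerm σ h) h i ≠ σ i} ≤ 2 * (n - m) :=
  calc #{i | liftPerm (cutPerm σ h) h i ≠ σ i}
      ≤ #(({i | m ≤ (σ i : ℕ)} : Finset _) ∪ ({i : Fin n | m ≤ (i : ℕ)} : Finset _)) := by
        refine card_le_card fun i => ?_
        simp only [Finset.mem_filter, Finset.mem_univ, true_and, Finset.mem_union]
        contrapose!
        exact fun ⟨hσi, hi⟩ => liftPerm_cutPerm_apply_of_lt h σ i hi hσi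
    _ ≤ #{i | m ≤ (σ i : ℕ)} + #{i : Fin n | m ≤ (i : ℕ)} := card_union_le _ _
    _ = 2 * (n - m) := by
        rw [card_equiv (t := {i : Fin n | m ≤ (i : ℕ)}) σ (by simp), card_filter_le_val, two_mul]

end CutLift

theorem cut_lift_properties_general (m n : ℕ) (hmn : m ≤ n) :
    (∀ σ : Equiv.Perm (Fin n),
        hd (liftPerm (cutPerm σ hmn) hmn) σ ≤ 2 * ((n : ℝ) - m) / n) ∧
    (∀ τ : Equiv.Perm (Fin m), cutPerm (liftPerm τ hmn) hmn = τ) := by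
  refine ⟨fun σ => div_le_div_of_nonneg_right ?_ n.cast_nonneg, cutPerm_liftPerm hmn⟩
  rw [← Nat.cast_sub hmn]
  exact_mod_cast card_filter_liftPerm_cutPerm_ne_le hmn σ

/-- for `m ≤ n`, `n ≥ 1`: (a) cutting then lifting moves `σ` at most `2(n-m)/n`;
(b) lifting then cutting is the identity. -/
theorem cut_lift_properties (m n : ℕ) (hn : 1 ≤ n) (hmn : m ≤ n) :
    (∀ σ : Equiv.Perm (Fin n),
        hd (liftPerm (cutPerm σ hmn) hmn) σ ≤ 2 * ((n : ℝ) - m) / n) ∧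
    (∀ τ : Equiv.Perm (Fin m), cutPerm (liftPerm τ hmn) hmn = τ) :=
  cut_lift_properties_general m n hmn

end SymPaper
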